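/- arXiv:2205.11884 — 8 statements merged into one kernel-verified Lean document; each statement's English description precedes it below -/
import Mathlib

section
/- Let k be an odd positive integer, let x_i, y_i, z_i ∈ {0,1} for 0 ≤ i ≤ n, and define S_t = Σ_{i=n-t}^n (x_i + z_i - k y_i) 2^i. Suppose x_i XOR y_i XOR z_i = 0 for all i with n-t ≤ i ≤ n and S_t < 0. Then for every natural number j with t < j ≤ n, S_j < 0. -/
/-!
Since `k` is odd, `x + z - k y ≡ x + y + z ≡ 0 (mod 2)` on the block `n - t ≤ i ≤ n`, so `S_t` is a
multiple of `2 ^ (n - t + 1)`, and being negative it is at most `-2 ^ (n - t + 1)`. Passing from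
`S_t` to `S_j` adds the terms with `n - j ≤ i < n - t`, each at most `2 * 2 ^ i`; their total is
below `2 ^ (n - t + 1)`, so the sum stays negative.
-/

open Finset

/-- `S_t = Σ_{i=n-t}^n (x_i + z_i - k y_i) 2^i` as an integer. -/
def Spoly (k n : ℕ) (x y z : ℕ → ℕ) (t : ℕ) : ℤ :=
  ∑ i ∈ Finset.Icc (n - t) n, ((x i : ℤ) + (z i : ℤ) - (k : ℤ) * (y i : ℤ)) * 2 ^ i

lemma two_dvd_add_sub_mul_of_odd {k x y z : ℕ} (hk : Odd k) (h : (x + y + z) % 2 = 0) :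
    (2 : ℤ) ∣ (x : ℤ) + z - k * y := by
  have hxyz : (2 : ℤ) ∣ (x : ℤ) + y + z := by exact_mod_cast Nat.dvd_of_mod_eq_zero h
  have hk1 : (2 : ℤ) ∣ k + 1 := by exact_mod_cast (hk.add_odd odd_one).two_dvd
  rw [show (x : ℤ) + z - k * y = (x + y + z) - (k + 1) * y by ring]
  exact dvd_sub hxyz (dvd_mul_of_dvd_left hk1 _)

lemma two_pow_succ_dvd_sum_mul_two_pow {a : ℕ → ℤ} {m n : ℕ} (h : ∀ i ∈ Ico m n, 2 ∣ a i) :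
    (2 : ℤ) ^ (m + 1) ∣ ∑ i ∈ Ico m n, a i * 2 ^ i := by
  refine dvd_sum fun i hi => ?_
  calc (2 : ℤ) ^ (m + 1) = 2 * 2 ^ m := by ring
    _ ∣ a i * 2 ^ i := mul_dvd_mul (h i hi) (pow_dvd_pow 2 (mem_Ico.mp hi).1)

lemma sum_mul_two_pow_le {a : ℕ → ℤ} {l m : ℕ} (hlm : l ≤ m) (h : ∀ i ∈ Ico l m, a i ≤ 2) :
    ∑ i ∈ Ico l m, a i * 2 ^ i ≤ 2 ^ (m + 1) - 2 ^ (l + 1) :=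
  calc ∑ i ∈ Ico l m, a i * 2 ^ i
      ≤ ∑ i ∈ Ico l m, 2 * (2 : ℤ) ^ i :=
        sum_le_sum fun i hi => mul_le_mul_of_nonneg_right (h i hi) (by positivity)
    _ = 2 ^ (m + 1) - 2 ^ (l + 1) := by
        rw [← mul_sum, ← mul_one (∑ i ∈ Ico l m, (2 : ℤ) ^ i), ← (by norm_num : (2 : ℤ) - 1 = 1),
          geom_sum_Ico_mul _ hlm]
        ring

lemma sum_mul_two_pow_neg_of_tail_neg {a : ℕ → ℤ} {l m n : ℕ} (hlm : l ≤ m) (hmn : m ≤ n)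
    (hlow : ∀ i ∈ Ico l m, a i ≤ 2) (heven : ∀ i ∈ Ico m n, 2 ∣ a i)
    (hneg : ∑ i ∈ Ico m n, a i * 2 ^ i < 0) :
    ∑ i ∈ Ico l n, a i * 2 ^ i < 0 := by
  have htail : ∑ i ∈ Ico m n, a i * 2 ^ i ≤ -2 ^ (m + 1) :=
    le_neg_of_le_neg <| Int.le_of_dvd (neg_pos.mpr hneg)
      (dvd_neg.mpr (two_pow_succ_dvd_sum_mul_two_pow heven))
  have hhead := sum_mul_two_pow_le hlm hlow
  have : (0 : ℤ) < 2 ^ (l + 1) := by positivity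
  rw [← sum_Ico_consecutive _ hlm hmn]
  linarith

theorem stmt_4_general (k n t : ℕ) (hk : Odd k)
    (x y z : ℕ → ℕ)
    (hx : ∀ i ≤ n, x i ≤ 1) (hz : ∀ i ≤ n, z i ≤ 1)
    (hxor : ∀ i, n - t ≤ i → i ≤ n → (x i + y i + z i) % 2 = 0)
    (hS : Spoly k n x y z t < 0) :
    ∀ j, t < j → j ≤ n → Spoly k n x y z j < 0 := by
  intro j htj hjn
  unfold Spoly at hS ⊢
  rw [← Ico_add_one_right_eq_Icc] at hS ⊢
  refine sum_mul_two_pow_neg_of_tail_neg (by omega) (by omega) (fun i hi => ?_) (fun i hi => ?_) hS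
  · have hin : i ≤ n := by grind
    have : (0 : ℤ) ≤ k * y i := by positivity
    have := hx i hin
    have := hz i hin
    omega
  · exact two_dvd_add_sub_mul_of_odd hk (hxor i (mem_Ico.mp hi).1 (by grind))

theorem stmt_4 (k n t : ℕ) (hk : Odd k) (hk0 : 0 < k) (ht : t ≤ n)
    (x y z : ℕ → ℕ)
    (hx : ∀ i ≤ n, x i ≤ 1) (hy : ∀ i ≤ n, y i ≤ 1) (hz : ∀ i ≤ n, z i ≤ 1)
    (hxor : ∀ i, n - t ≤ i → i ≤ n → (x i + y i + z i) % 2 = 0)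
    (hS : Spoly k n x y z t < 0) :
    ∀ j, t < j → j ≤ n → Spoly k n x y z j < 0 :=
  stmt_4_general k n t hk x y z hx hz hxor hS
end

section
/- Let k be an odd positive integer, let x, y, z be non-negative integers with binary digits x_i, y_i, z_i for 0 ≤ i ≤ n, and define S_t = Σ_{i=n-t}^n (x_i + z_i - k y_i) 2^i. Suppose x_i XOR y_i XOR z_i = 0 for all i with 0 ≤ i ≤ n-t, and y ≤ floor((x+z)/k). Then S_t ≥ 0. -/
open Finset

theorem nonneg_of_dvd_of_neg_lt {a d : ℤ} (hd : d ∣ a) (h : -d < a) : 0 ≤ a := by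
  obtain ⟨c, rfl⟩ := hd
  rcases lt_trichotomy d 0 with hneg | rfl | hpos
  · nlinarith
  · simp
  · have : -1 < c := by nlinarith
    nlinarith

theorem sum_range_succ_eq_sum_range_add_sum_Icc {M : Type*} [AddCommMonoid M] (f : ℕ → M)
    {m n : ℕ} (h : m ≤ n) :
    ∑ i ∈ range (n + 1), f i = ∑ i ∈ range m, f i + ∑ i ∈ Icc m n, f i := by
  rw [← Ico_add_one_right_eq_Icc, sum_range_add_sum_Ico f (by omega : m ≤ n + 1)]

theorem sum_range_mul_two_pow_lt {c : ℕ → ℤ} {m : ℕ} (hc : ∀ i < m, c i ≤ 2) :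
    ∑ i ∈ range m, c i * 2 ^ i < 2 ^ (m + 1) := by
  have hgeom : ∑ i ∈ range m, (2 : ℤ) ^ i = 2 ^ m - 1 := by simpa using geom_sum_mul (2 : ℤ) m
  calc ∑ i ∈ range m, c i * 2 ^ i
      ≤ ∑ i ∈ range m, 2 * 2 ^ i :=
        sum_le_sum fun i hi => by gcongr; exact hc i (mem_range.mp hi)
    _ = 2 ^ (m + 1) - 2 := by rw [← mul_sum, hgeom]; ring
    _ < 2 ^ (m + 1) := by linarith

theorem pow_succ_dvd_sum_Icc_mul_pow {R : Type*} [CommSemiring R] {p : R} {c : ℕ → R} {m : ℕ}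
    (hc : p ∣ c m) (n : ℕ) : p ^ (m + 1) ∣ ∑ i ∈ Icc m n, c i * p ^ i := by
  refine dvd_sum fun i hi => ?_
  rcases (mem_Icc.mp hi).1.eq_or_lt with rfl | hlt
  · rw [pow_succ, mul_comm (c m)]
    exact mul_dvd_mul_left _ hc
  · exact (pow_dvd_pow p hlt).mul_left _

theorem even_add_sub_mul_of_even_add_add {a b c k : ℤ} (hk : Odd k) (h : Even (a + b + c)) :
    Even (a + c - k * b) := by
  rw [show a + c - k * b = a + b + c - (k + 1) * b by ring]
  exact h.sub (hk.add_one.mul_right b)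

theorem stmt_5_general (k n t : ℕ) (hk : Odd k)
    (x y z : ℕ → ℕ)
    (hx : ∀ i ≤ n, x i ≤ 1) (hz : ∀ i ≤ n, z i ≤ 1)
    (X Y Z : ℕ)
    (hX : X = ∑ i ∈ Finset.range (n + 1), x i * 2 ^ i)
    (hY : Y = ∑ i ∈ Finset.range (n + 1), y i * 2 ^ i)
    (hZ : Z = ∑ i ∈ Finset.range (n + 1), z i * 2 ^ i)
    (hxor : ∀ i ≤ n - t, (x i + y i + z i) % 2 = 0)
    (hyf : Y ≤ (X + Z) / k) :
    0 ≤ Spoly k n x y z t := by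
  set m := n - t
  set c : ℕ → ℤ := fun i => x i + z i - k * y i
  have hsplit : (X + Z - k * Y : ℤ) = ∑ i ∈ range m, c i * 2 ^ i + Spoly k n x y z t := by
    rw [Spoly, ← sum_range_succ_eq_sum_range_add_sum_Icc _ (Nat.sub_le n t), hX, hY, hZ]
    push_cast
    simp only [c, sub_mul, add_mul, mul_assoc, ← mul_sum, sum_add_distrib, sum_sub_distrib]
  have hkY : (k * Y : ℤ) ≤ X + Z := by
    rw [mul_comm]
    exact_mod_cast (Nat.le_div_iff_mul_le hk.pos).mp hyf
  have hlow : ∑ i ∈ range m, c i * 2 ^ i < 2 ^ (m + 1) := by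
    refine sum_range_mul_two_pow_lt fun i hi => ?_
    have hxi : (x i : ℤ) ≤ 1 := by exact_mod_cast hx i (by omega)
    have hzi : (z i : ℤ) ≤ 1 := by exact_mod_cast hz i (by omega)
    have : (0 : ℤ) ≤ k * y i := by positivity
    simp only [c]; linarith
  have hdvd : (2 : ℤ) ^ (m + 1) ∣ Spoly k n x y z t := by
    refine pow_succ_dvd_sum_Icc_mul_pow (even_iff_two_dvd.mp ?_) n
    exact even_add_sub_mul_of_even_add_add (by exact_mod_cast hk)
      (by rw [Int.even_iff]; exact_mod_cast hxor m le_rfl)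
  exact nonneg_of_dvd_of_neg_lt hdvd (by linarith)

theorem stmt_5 (k n t : ℕ) (hk : Odd k) (hk0 : 0 < k) (ht : t ≤ n)
    (x y z : ℕ → ℕ)
    (hx : ∀ i ≤ n, x i ≤ 1) (hy : ∀ i ≤ n, y i ≤ 1) (hz : ∀ i ≤ n, z i ≤ 1)
    (X Y Z : ℕ)
    (hX : X = ∑ i ∈ Finset.range (n + 1), x i * 2 ^ i)
    (hY : Y = ∑ i ∈ Finset.range (n + 1), y i * 2 ^ i)
    (hZ : Z = ∑ i ∈ Finset.range (n + 1), z i * 2 ^ i)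
    (hxor : ∀ i ≤ n - t, (x i + y i + z i) % 2 = 0)
    (hyf : Y ≤ (X + Z) / k) :
    0 ≤ Spoly k n x y z t :=
  stmt_5_general k n t hk x y z hx hz X Y Z hX hY hZ hxor hyf
end

section
/- Let k be a positive integer, let x_i, y_i, z_i ∈ {0,1} for 0 ≤ i ≤ n, and define S_t = Σ_{i=n-t}^n (x_i + z_i - k y_i) 2^i. If S_t ≥ k·2^{n-t}, then for every natural number j with t < j ≤ n, S_j ≥ k·2^{n-j}. -/
lemma Spoly_succ (k n : ℕ) (x y z : ℕ → ℕ) {s : ℕ} (hs : s < n) :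
    Spoly k n x y z (s + 1) =
      ((x (n - (s + 1)) : ℤ) + z (n - (s + 1)) - k * y (n - (s + 1))) * 2 ^ (n - (s + 1)) +
        Spoly k n x y z s := by
  have hsucc : n - s = n - (s + 1) + 1 := by omega
  rw [Spoly, Spoly, hsucc, ← Finset.insert_Icc_add_one_left_eq_Icc (by omega : n - (s + 1) ≤ n),
    Finset.sum_insert (by simp)]

lemma neg_le_digit (k : ℕ) {a b c : ℕ} (hb : b ≤ 1) : -(k : ℤ) ≤ a + c - k * b := by
  have hkb : (k : ℤ) * b ≤ k := mul_le_of_le_one_right (by positivity) (by exact_mod_cast hb)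
  omega

lemma Spoly_succ_ge_of_ge (k n : ℕ) (x y z : ℕ → ℕ) {s : ℕ} (hs : s < n)
    (hy : y (n - (s + 1)) ≤ 1) (h : (k : ℤ) * 2 ^ (n - s) ≤ Spoly k n x y z s) :
    (k : ℤ) * 2 ^ (n - (s + 1)) ≤ Spoly k n x y z (s + 1) := by
  have hpow : (2 : ℤ) ^ (n - s) = 2 * 2 ^ (n - (s + 1)) := by
    rw [← pow_succ']; congr 1; omega
  have hdigit := mul_le_mul_of_nonneg_right (neg_le_digit k (a := x (n - (s + 1)))
    (c := z (n - (s + 1))) hy) (by positivity : (0 : ℤ) ≤ 2 ^ (n - (s + 1)))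
  rw [Spoly_succ k n x y z hs]
  rw [hpow] at h
  linarith

theorem stmt_6_general (k n t : ℕ)
    (x y z : ℕ → ℕ)
    (hy : ∀ i ≤ n, y i ≤ 1)
    (hS : Spoly k n x y z t ≥ (k : ℤ) * 2 ^ (n - t)) :
    ∀ j, t < j → j ≤ n → Spoly k n x y z j ≥ (k : ℤ) * 2 ^ (n - j) := by
  intro j htj
  induction j, htj using Nat.le_induction with
  | base =>
    intro htn
    exact Spoly_succ_ge_of_ge k n x y z htn (hy _ (by omega)) hS
  | succ j htj ih =>
    intro hjn
    exact Spoly_succ_ge_of_ge k n x y z hjn (hy _ (by omega)) (ih (by omega))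

theorem stmt_6 (k n t : ℕ) (hk : 0 < k) (ht : t ≤ n)
    (x y z : ℕ → ℕ)
    (hx : ∀ i ≤ n, x i ≤ 1) (hy : ∀ i ≤ n, y i ≤ 1) (hz : ∀ i ≤ n, z i ≤ 1)
    (hS : Spoly k n x y z t ≥ (k : ℤ) * 2 ^ (n - t)) :
    ∀ j, t < j → j ≤ n → Spoly k n x y z j ≥ (k : ℤ) * 2 ^ (n - j) :=
  stmt_6_general k n t x y z hy hS
end

section
/- Let k = 4m+3 for a non-negative integer m and let f(x,z) = floor((x+z)/k). Suppose x, y, z are non-negative integers with XOR x ⊕ y ⊕ z ≠ 0 and y ≤ f(x,z). Then at least one of the following holds: (1) there exists u < x with u ⊕ y ⊕ z = 0; (2) there exist u < x and v < y with v = f(u,z) and u ⊕ v ⊕ z = 0; (3) there exists v < y with x ⊕ v ⊕ z = 0; (4) there exists w < z with y ≤ f(x,w) and x ⊕ y ⊕ w = 0; (5) there exist v < y and w < z with v = f(x,w) and x ⊕ v ⊕ w = 0. -/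
/-!
Write `k` for `4m+3`. By the usual nim argument one of `x`, `y`, `z` can be lowered to reach xor
zero; only lowering `z` to `w = x ^^^ y` can fail, namely when `y > (x + w) / k`. In that case the
map `v ↦ (x + (x ^^^ v)) / k` has a fixed point `v < y`, which gives option (5) with
`w = x ^^^ v`. The fixed point exists because for odd `k` the strict inequality
`x + (x ^^^ v) < k * v` survives, in the weakened form `x + (x ^^^ (v - 1)) < k * v`, the step from
`v` to `v - 1`.
-/

namespace Nat

theorem add_xor_sub_one_lt_mul {k : ℕ} (hk : Odd k) {x y : ℕ} (hy : y ≠ 0)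
    (h : x + (x ^^^ y) < k * y) : x + (x ^^^ (y - 1)) < k * y := by
  obtain ⟨c, rfl⟩ := hk
  induction y using Nat.binaryRec generalizing x with
  | zero => exact absurd rfl hy
  | bit f y ih =>
    obtain ⟨e, x, rfl⟩ : ∃ e x', bit e x' = x := ⟨_, _, bit_testBit_zero_shiftRight_one x⟩
    cases f
    · have hy' : y ≠ 0 := by rintro rfl; simp at hy
      have hpred : bit false y - 1 = bit true (y - 1) := by
        simp only [bit_val, Bool.toNat_true, Bool.toNat_false]; omega
      rw [hpred, xor_bit]
      rw [xor_bit] at h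
      have hhalf : x + (x ^^^ y) < (2 * c + 1) * y := by
        cases e <;> simp [bit_val] at h <;> nlinarith
      have := ih hy' hhalf
      cases e <;> simp [bit_val] at h ⊢ <;> nlinarith
    · -- both sides of `h` are odd, which leaves room for the extra `1` in the goal
      have hpred : bit true y - 1 = bit false y := by
        simp only [bit_val, Bool.toNat_true, Bool.toNat_false]; omega
      rw [hpred, xor_bit]
      rw [xor_bit] at h
      cases e <;> simp [bit_val] at h ⊢ <;> ring_nf at h ⊢ <;> omega

theorem exists_lt_add_xor_div_eq {k : ℕ} (hk : Odd k) {x y : ℕ}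
    (h : (x + (x ^^^ y)) / k < y) : ∃ v < y, (x + (x ^^^ v)) / k = v := by
  induction y with
  | zero => exact absurd h (Nat.not_lt_zero _)
  | succ n ih =>
    have hstep : (x + (x ^^^ n)) / k < n + 1 := by
      rw [Nat.div_lt_iff_lt_mul hk.pos] at h ⊢
      rw [mul_comm] at h ⊢
      exact add_xor_sub_one_lt_mul hk n.succ_ne_zero h
    rcases (Nat.lt_succ_iff.mp hstep).lt_or_eq with hlt | heq
    · obtain ⟨v, hv, hfix⟩ := ih hlt
      exact ⟨v, hv.trans n.lt_succ_self, hfix⟩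
    · exact ⟨n, n.lt_succ_self, heq⟩

end Nat

theorem stmt_11 (m x y z : ℕ)
    (h1 : x ^^^ y ^^^ z ≠ 0)
    (h2 : y ≤ (x + z) / (4 * m + 3)) :
    (∃ u < x, u ^^^ y ^^^ z = 0) ∨
    (∃ u < x, ∃ v < y, v = (u + z) / (4 * m + 3) ∧ u ^^^ v ^^^ z = 0) ∨
    (∃ v < y, x ^^^ v ^^^ z = 0) ∨
    (∃ w < z, y ≤ (x + w) / (4 * m + 3) ∧ x ^^^ y ^^^ w = 0) ∨
    (∃ v < y, ∃ w < z, v = (x + w) / (4 * m + 3) ∧ x ^^^ v ^^^ w = 0) := by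
  have hk : Odd (4 * m + 3) := ⟨2 * m + 1, by ring⟩
  rcases Nat.xor_trichotomy h1 with hx | hy | hz
  · exact Or.inl ⟨y ^^^ z, hx, by rw [Nat.xor_assoc, Nat.xor_self]⟩
  · refine Or.inr (Or.inr (Or.inl ⟨z ^^^ x, hy, ?_⟩))
    rw [Nat.xor_comm z x, Nat.xor_xor_cancel_left, Nat.xor_self]
  · by_cases hw : y ≤ (x + (x ^^^ y)) / (4 * m + 3)
    · exact Or.inr (Or.inr (Or.inr (Or.inl ⟨x ^^^ y, hz, hw, Nat.xor_self _⟩)))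
    obtain ⟨v, hvy, hfix⟩ := Nat.exists_lt_add_xor_div_eq hk (not_le.mp hw)
    have hvz : x ^^^ v < z :=
      Nat.lt_of_add_lt_add_left (Nat.lt_of_div_lt_div (hfix ▸ hvy.trans_le h2))
    exact Or.inr (Or.inr (Or.inr (Or.inr ⟨v, hvy, x ^^^ v, hvz, hfix.symm, Nat.xor_self _⟩)))
end

section
/- Let k = 4m+3 for a non-negative integer m and let f(x,z) = floor((x+z)/k). Suppose x, y, z are non-negative integers with x ⊕ y ⊕ z = 0 and y ≤ f(x,z). Then: (1) u ⊕ y ⊕ z ≠ 0 for all u < x; (2) u ⊕ v ⊕ z ≠ 0 for all u < x, v < y with v = f(u,z); (3) x ⊕ v ⊕ z ≠ 0 for all v < y; (4) x ⊕ y ⊕ w ≠ 0 for all w < z with y ≤ f(x,w); (5) x ⊕ v ⊕ w ≠ 0 for all v < y, w < z with v = f(x,w). -/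
/-!
Write `k = 2c + 1` with `c = 2m + 1` odd. Since `a + b = (a ⊕ b) + 2 (a & b)`, the conditions
`k y ≤ (y ⊕ z) + z` and `(v ⊕ z) + z < k (v + 1)` become `c y + (z & y) ≤ z` and
`z ≤ c (v + 1) + (z & v)`. Under these two inequalities, `v < y` forces `y ⊕ z < v ⊕ z`: halving
`y`, `v`, `z` preserves both inequalities, so we descend until `v` and `y` differ only in their
last bit, and there the inequalities squeeze `2 (z / 2)` onto an odd number.

The third pile is determined by the other two, so moves (1), (3), (4) cannot reach a zero nim-sum,
and moves (2), (5) would need exactly the decrease of `y ⊕ z` excluded above (in (5) with the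
roles of `x` and `z` exchanged).
-/

namespace Nat

theorem add_eq_xor_add_two_mul_and (a b : ℕ) : a + b = (a ^^^ b) + 2 * (a &&& b) := by
  induction a using Nat.strong_induction_on generalizing b with
  | _ a ih =>
    rcases Nat.eq_zero_or_pos a with rfl | ha
    · simp
    have ih' := ih (a / 2) (Nat.div_lt_self ha one_lt_two) (b / 2)
    have hxor_div := Nat.xor_div_two (a := a) (b := b)
    have hand_div := Nat.and_div_two (a := a) (b := b)
    have hxor_mod : (a ^^^ b) % 2 = (a + b) % 2 := Nat.xor_mod_two_eq
    have hand_mod := Nat.and_mod_two_eq_one (a := a) (b := b)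
    omega

theorem xor_xor_eq_zero_iff {a b c : ℕ} : a ^^^ b ^^^ c = 0 ↔ a = b ^^^ c := by
  rw [xor_assoc, xor_eq_zero_iff]

theorem mul_add_and_eq_two_mul_add (c z y : ℕ) :
    c * y + (z &&& y) =
      2 * (c * (y / 2) + (z / 2 &&& y / 2)) + (c * (y % 2) + (z &&& y) % 2) := by
  rw [← Nat.and_div_two]
  calc c * y + (z &&& y) = c * (2 * (y / 2) + y % 2) + (2 * ((z &&& y) / 2) + (z &&& y) % 2) := by
        rw [Nat.div_add_mod, Nat.div_add_mod]
    _ = _ := by ring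

theorem xor_lt_xor_of_mul_add_and_le {c : ℕ} (hc : Odd c) {y v z : ℕ} (hvy : v < y)
    (hy : c * y + (z &&& y) ≤ z) (hv : z ≤ c * (v + 1) + (z &&& v)) : y ^^^ z < v ^^^ z := by
  induction y using Nat.strong_induction_on generalizing v z with
  | _ y ih =>
    have hy_halve := mul_add_and_eq_two_mul_add c z y
    have hv_halve := mul_add_and_eq_two_mul_add c z v
    have hzy_bit := Nat.and_mod_two_eq_one (a := z) (b := y)
    have hzv_bit := Nat.and_mod_two_eq_one (a := z) (b := v)
    have hv_succ : c * (v + 1) = c * v + c := Nat.mul_succ c v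
    have hv_succ' : c * (v / 2 + 1) = c * (v / 2) + c := Nat.mul_succ c (v / 2)
    have hv_bit : c * (v % 2) ≤ c * 1 := Nat.mul_le_mul_left c (by omega)
    rcases (Nat.div_le_div_right hvy.le : v / 2 ≤ y / 2).lt_or_eq with hlt | heq
    · have ih' := ih (y / 2) (by omega) hlt (z := z / 2) (by omega) (by omega)
      rw [← Nat.xor_div_two, ← Nat.xor_div_two] at ih'
      exact Nat.lt_of_div_lt_div ih'
    · have hy_odd : y % 2 = 1 := by omega
      have hv_even : v % 2 = 0 := by omega
      rw [hy_odd, mul_one] at hy_halve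
      rw [hv_even, mul_zero, heq] at hv_halve
      have hc2 : c % 2 = 1 := Nat.odd_iff.mp hc
      omega

theorem mul_le_xor_add_iff (c y z : ℕ) :
    (2 * c + 1) * y ≤ (y ^^^ z) + z ↔ c * y + (z &&& y) ≤ z := by
  have hsum := add_eq_xor_add_two_mul_and y z
  have hmul : (2 * c + 1) * y = 2 * (c * y) + y := by ring
  rw [Nat.land_comm] at hsum
  omega

theorem xor_add_lt_mul_succ_iff (c v z : ℕ) :
    (v ^^^ z) + z < (2 * c + 1) * (v + 1) ↔ z ≤ c * (v + 1) + (z &&& v) := by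
  have hsum := add_eq_xor_add_two_mul_and v z
  have hmul : (2 * c + 1) * (v + 1) = 2 * (c * (v + 1)) + v + 1 := by ring
  rw [Nat.land_comm] at hsum
  omega

theorem xor_lt_xor_of_le_div (n : ℕ) {y v z : ℕ} (hvy : v < y)
    (hy : y ≤ ((y ^^^ z) + z) / (4 * n + 3)) (hv : ((v ^^^ z) + z) / (4 * n + 3) ≤ v) :
    y ^^^ z < v ^^^ z := by
  have hk : 4 * n + 3 = 2 * (2 * n + 1) + 1 := by ring
  rw [hk] at hy hv
  rw [Nat.le_div_iff_mul_le (by omega), mul_comm, mul_le_xor_add_iff] at hy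
  rw [← Nat.lt_succ_iff, Nat.div_lt_iff_lt_mul (by omega), mul_comm, xor_add_lt_mul_succ_iff] at hv
  exact xor_lt_xor_of_mul_add_and_le (odd_two_mul_add_one n) hvy hy hv

end Nat

theorem stmt_12 (m x y z : ℕ)
    (h1 : x ^^^ y ^^^ z = 0)
    (h2 : y ≤ (x + z) / (4 * m + 3)) :
    (∀ u < x, u ^^^ y ^^^ z ≠ 0) ∧
    (∀ u < x, ∀ v < y, v = (u + z) / (4 * m + 3) → u ^^^ v ^^^ z ≠ 0) ∧
    (∀ v < y, x ^^^ v ^^^ z ≠ 0) ∧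
    (∀ w < z, y ≤ (x + w) / (4 * m + 3) → x ^^^ y ^^^ w ≠ 0) ∧
    (∀ v < y, ∀ w < z, v = (x + w) / (4 * m + 3) → x ^^^ v ^^^ w ≠ 0) := by
  have hz : z = x ^^^ y := (xor_eq_zero_iff.mp h1).symm
  have hx : x = y ^^^ z := Nat.xor_xor_eq_zero_iff.mp h1
  refine ⟨?_, ?_, ?_, ?_, ?_⟩
  · intro u hu h
    exact hu.ne ((xor_left_involutive y).injective (hz ▸ xor_eq_zero_iff.mp h))
  · intro u hu v hv hveq h
    have hu' : u = v ^^^ z := Nat.xor_xor_eq_zero_iff.mp h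
    subst hu'
    have := Nat.xor_lt_xor_of_le_div m hv (hx ▸ h2) hveq.ge
    omega
  · intro v hv h
    exact hv.ne ((xor_right_involutive x).injective (hz ▸ xor_eq_zero_iff.mp h))
  · intro w hw _ h
    exact hw.ne (hz ▸ (xor_eq_zero_iff.mp h).symm)
  · intro v hv w hw hveq h
    have hw' : w = x ^^^ v := (xor_eq_zero_iff.mp h).symm
    rw [hw', add_comm, Nat.xor_comm x v] at hveq
    rw [hz, add_comm, Nat.xor_comm x y] at h2
    have := Nat.xor_lt_xor_of_le_div m hv h2 hveq.ge
    rw [Nat.xor_comm y x, Nat.xor_comm v x, ← hz, ← hw'] at this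
    omega
end

section
/- Let k = 4m+3 for a non-negative integer m and let f(x,z) = floor((x+z)/k). Consider the impartial game on states {(x,y,z) : x,y,z ∈ Z_{≥0}, y ≤ f(x,z)} where from (x,y,z) one may move to: (u, min(f(u,z), y), z) for any u < x; (x, v, z) for any v < y; or (x, min(y, f(x,w)), w) for any w < z. Then (x,y,z) is a P-position (previous-player win) if and only if x ⊕ y ⊕ z = 0. -/
/-!
Write `h(z, b) = (z ⊕ b) + z`. The nim-zero position `(z ⊕ b, b, z)` lies on the boundary
`y = f(x, z)` exactly when `⌊h(z, b) / k⌋ = b`. From `h(z, 2b) = 2 h(z/2, b) + 2 (z mod 2)` and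
`h(z, 2b + 1) = 2 h(z/2, b) + 1`, a binary induction gives, for `k ≡ 3 (mod 4)`:
if `k y ≤ h(z, y)` then `k (b + 1) < h(z, b)` for every `b < y`, and
if `h(z, y) < k y` then `⌊h(z, b) / k⌋ = b` for some `b < y`.
The first fact shows that a move in `x` which truncates `y` never reaches a nim-zero position
from a nim-zero position; the second provides such a truncating move to a nim-zero position
whenever the Nim move `x ↦ y ⊕ z` would leave the state space. Moves in `z` are symmetric.
-/

/-- Moves of the three-dimensional chocolate-bar game with `f x z = (x + z) / k`. -/
def moveF (k : ℕ) (p : ℕ × ℕ × ℕ) : Set (ℕ × ℕ × ℕ) :=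
  {q | (∃ u < p.1, q = (u, min ((u + p.2.2) / k) p.2.1, p.2.2)) ∨
       (∃ v < p.2.1, q = (p.1, v, p.2.2)) ∨
       (∃ w < p.2.2, q = (p.1, min p.2.1 ((p.1 + w) / k), w))}

/-- `p` is a P-position: every move leads to a non-P-position (so the terminal
position, having no moves, is a P-position). -/
def PPos (k : ℕ) (p : ℕ × ℕ × ℕ) : Prop :=
  ∀ q ∈ moveF k p, ¬ PPos k q
termination_by p.1 + p.2.1 + p.2.2
decreasing_by
  rename_i hq
  simp only [moveF, Set.mem_setOf_eq] at hq
  rcases hq with ⟨u, hu, rfl⟩ | ⟨v, hv, rfl⟩ | ⟨w, hw, rfl⟩ <;> simp <;> omega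

namespace Nat

theorem xor_two_mul_add_self (z b : ℕ) :
    (z ^^^ 2 * b) + z = 2 * ((z / 2 ^^^ b) + z / 2) + 2 * (z % 2) := by
  have hdiv : (z ^^^ 2 * b) / 2 = z / 2 ^^^ b := by simp [xor_div_two]
  have hmod : (z ^^^ 2 * b) % 2 = z % 2 := by rw [xor_mod_two_eq]; omega
  omega

theorem xor_two_mul_add_one_add_self (z b : ℕ) :
    (z ^^^ (2 * b + 1)) + z = 2 * ((z / 2 ^^^ b) + z / 2) + 1 := by
  have hdiv : (z ^^^ (2 * b + 1)) / 2 = z / 2 ^^^ b := by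
    rw [xor_div_two]; congr 1; omega
  have hmod : (z ^^^ (2 * b + 1)) % 2 = 1 - z % 2 := by rw [xor_mod_two_eq]; omega
  omega

theorem xor_add_self_mod_two (z b : ℕ) : ((z ^^^ b) + z) % 2 = b % 2 := by
  rw [Nat.add_mod, xor_mod_two_eq]; omega

end Nat

theorem mul_succ_lt_xor_add_self (m : ℕ) {y z b : ℕ} (hy : (4 * m + 3) * y ≤ (z ^^^ y) + z)
    (hb : b < y) : (4 * m + 3) * (b + 1) < (z ^^^ b) + z := by
  induction y using Nat.strong_induction_on generalizing z b with
  | _ y ih =>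
  have hpar := Nat.xor_add_self_mod_two (z / 2)
  obtain ⟨y', rfl | rfl⟩ := y.even_or_odd' <;>
  · simp only [Nat.xor_two_mul_add_self, Nat.xor_two_mul_add_one_add_self] at hy
    have hhalf : (4 * m + 3) * y' ≤ (z / 2 ^^^ y') + z / 2 := by
      have := hpar y'
      ring_nf at hy this ⊢
      omega
    obtain ⟨b', rfl | rfl⟩ := b.even_or_odd' <;>
    · simp only [Nat.xor_two_mul_add_self, Nat.xor_two_mul_add_one_add_self]
      rcases Nat.lt_or_ge b' y' with hlt | hge
      · have := ih y' (by omega) hhalf hlt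
        ring_nf at this hy ⊢
        omega
      · -- `b = 2y'` and `y = 2y' + 1`: parity lifts the slack `(k - 1) / 2` inherited from `y`
        -- to `(k + 1) / 2`, because `(k - 1) / 2` is odd when `k ≡ 3 (mod 4)`
        obtain rfl : b' = y' := by omega
        have := hpar b'
        ring_nf at hy hhalf this ⊢
        omega

theorem exists_lt_of_xor_add_self_lt_mul (m : ℕ) {y z : ℕ}
    (hy : (z ^^^ y) + z < (4 * m + 3) * y) :
    ∃ b < y, (4 * m + 3) * b ≤ (z ^^^ b) + z ∧ (z ^^^ b) + z < (4 * m + 3) * (b + 1) := by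
  induction y using Nat.strong_induction_on generalizing z with
  | _ y ih =>
  have descend (y' : ℕ) (hy'y : 2 * y' ≤ y) (hlt : (z / 2 ^^^ y') + z / 2 < (4 * m + 3) * y') :
      ∃ b < y, (4 * m + 3) * b ≤ (z ^^^ b) + z ∧ (z ^^^ b) + z < (4 * m + 3) * (b + 1) := by
    have hpos : y' ≠ 0 := by rintro rfl; simp at hlt
    obtain ⟨b', hb', hlo, hhi⟩ := ih y' (by omega) hlt
    by_cases hodd : (4 * m + 3) * b' + 2 * m + 1 ≤ (z / 2 ^^^ b') + z / 2
    · refine ⟨2 * b' + 1, by omega, ?_⟩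
      rw [Nat.xor_two_mul_add_one_add_self]
      ring_nf at hlo hhi hodd ⊢
      omega
    · refine ⟨2 * b', by omega, ?_⟩
      rw [Nat.xor_two_mul_add_self]
      ring_nf at hlo hhi hodd ⊢
      omega
  obtain ⟨y', rfl | rfl⟩ := y.even_or_odd'
  · rw [Nat.xor_two_mul_add_self] at hy
    exact descend y' le_rfl (by ring_nf at hy ⊢; omega)
  · by_cases hrow : (4 * m + 3) * y' ≤ (z / 2 ^^^ y') + z / 2
    · refine ⟨2 * y', by omega, ?_⟩
      rw [Nat.xor_two_mul_add_self]
      rw [Nat.xor_two_mul_add_one_add_self] at hy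
      ring_nf at hy hrow ⊢
      omega
    · exact descend y' (by omega) (not_le.mp hrow)

theorem sum_lt_of_mem_moveF {k : ℕ} {p q : ℕ × ℕ × ℕ} (hq : q ∈ moveF k p) :
    q.1 + q.2.1 + q.2.2 < p.1 + p.2.1 + p.2.2 := by
  rcases hq with ⟨u, hu, rfl⟩ | ⟨v, hv, rfl⟩ | ⟨w, hw, rfl⟩ <;> dsimp only <;> omega

theorem PPos_iff_of_kernel {k : ℕ} (V S : ℕ × ℕ × ℕ → Prop)
    (hV : ∀ p, V p → ∀ q ∈ moveF k p, V q)
    (hS : ∀ p, V p → S p → ∀ q ∈ moveF k p, ¬ S q)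
    (hN : ∀ p, V p → ¬ S p → ∃ q ∈ moveF k p, S q) (p : ℕ × ℕ × ℕ) (hp : V p) :
    PPos k p ↔ S p := by
  induction hsum : p.1 + p.2.1 + p.2.2 using Nat.strong_induction_on generalizing p with
  | _ n ih =>
  have ih' (q) (hq : q ∈ moveF k p) : PPos k q ↔ S q :=
    ih _ (hsum ▸ sum_lt_of_mem_moveF hq) q (hV p hp q hq) rfl
  rw [PPos]
  constructor
  · intro hP
    by_contra hSp
    obtain ⟨q, hq, hSq⟩ := hN p hp hSp
    exact hP q hq ((ih' q hq).2 hSq)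
  · intro hSp q hq hPq
    exact hS p hp hSp q hq ((ih' q hq).1 hPq)

theorem le_div_of_mem_moveF {k x y z : ℕ} (hy : y ≤ (x + z) / k) {q : ℕ × ℕ × ℕ}
    (hq : q ∈ moveF k (x, y, z)) : q.2.1 ≤ (q.1 + q.2.2) / k := by
  rcases hq with ⟨u, -, rfl⟩ | ⟨v, hv, rfl⟩ | ⟨w, -, rfl⟩
  · exact min_le_left _ _
  · exact hv.le.trans hy
  · exact min_le_right _ _

section

variable (m : ℕ) {x y z : ℕ}

theorem xor_ne_zero_of_fst_move (hy : y ≤ (x + z) / (4 * m + 3)) (hxyz : x ^^^ y ^^^ z = 0)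
    {u : ℕ} (hu : u < x) : u ^^^ min ((u + z) / (4 * m + 3)) y ^^^ z ≠ 0 := by
  rw [Ne, Nat.xor_assoc, xor_eq_zero_iff]
  rw [Nat.xor_assoc, xor_eq_zero_iff] at hxyz
  rcases le_or_gt y ((u + z) / (4 * m + 3)) with hle | hlt
  · rw [min_eq_right hle]
    omega
  · rw [min_eq_left hlt.le]
    intro hu'
    have hrow : (4 * m + 3) * y ≤ (z ^^^ y) + z := by
      rw [Nat.xor_comm, ← hxyz, Nat.mul_comm]
      exact (Nat.le_div_iff_mul_le (by omega)).1 hy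
    have hbelow := Nat.lt_mul_div_succ (u + z) (show 0 < 4 * m + 3 by omega)
    have habove := mul_succ_lt_xor_add_self m hrow hlt
    rw [Nat.xor_comm, ← hu'] at habove
    omega

theorem exists_fst_move_xor_eq_zero (hy : y ≤ (x + z) / (4 * m + 3)) (hyz : y ^^^ z < x) :
    ∃ u < x, u ^^^ min ((u + z) / (4 * m + 3)) y ^^^ z = 0 := by
  have hk : 0 < 4 * m + 3 := by omega
  have hxz : (4 * m + 3) * y ≤ x + z := by
    rw [Nat.mul_comm]; exact (Nat.le_div_iff_mul_le hk).1 hy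
  by_cases hrow : (4 * m + 3) * y ≤ (z ^^^ y) + z
  · refine ⟨y ^^^ z, hyz, ?_⟩
    have hyle : y ≤ ((y ^^^ z) + z) / (4 * m + 3) := by
      rw [Nat.le_div_iff_mul_le hk, Nat.mul_comm, Nat.xor_comm]
      exact hrow
    rw [min_eq_right hyle]
    simp
  · obtain ⟨b, hby, hlo, hhi⟩ := exists_lt_of_xor_add_self_lt_mul m (not_le.1 hrow)
    have hdiv : ((z ^^^ b) + z) / (4 * m + 3) = b :=
      Nat.div_eq_of_lt_le (by rwa [Nat.mul_comm]) (by rwa [Nat.mul_comm])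
    have hkb : (4 * m + 3) * (b + 1) ≤ (4 * m + 3) * y := Nat.mul_le_mul_left _ hby
    refine ⟨z ^^^ b, by omega, ?_⟩
    rw [hdiv, min_eq_left hby.le]
    simp

theorem xor_ne_zero_of_mem_moveF (hy : y ≤ (x + z) / (4 * m + 3)) (hxyz : x ^^^ y ^^^ z = 0)
    {q : ℕ × ℕ × ℕ} (hq : q ∈ moveF (4 * m + 3) (x, y, z)) :
    q.1 ^^^ q.2.1 ^^^ q.2.2 ≠ 0 := by
  rcases hq with ⟨u, hu, rfl⟩ | ⟨v, hv, rfl⟩ | ⟨w, hw, rfl⟩ <;> dsimp only at *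
  · exact xor_ne_zero_of_fst_move m hy hxyz hu
  · intro hv0
    rw [← hv0, Nat.xor_left_inj, Nat.xor_right_inj] at hxyz
    omega
  · -- the game is symmetric under exchanging `x` and `z`
    have h := xor_ne_zero_of_fst_move m (x := z) (y := y) (z := x) (by rwa [Nat.add_comm])
      (by rw [← hxyz]; ac_rfl) hw
    rw [min_comm, Nat.add_comm w] at h
    convert h using 1
    ac_rfl

theorem exists_mem_moveF_xor_eq_zero (hy : y ≤ (x + z) / (4 * m + 3))
    (hxyz : x ^^^ y ^^^ z ≠ 0) :
    ∃ q ∈ moveF (4 * m + 3) (x, y, z), q.1 ^^^ q.2.1 ^^^ q.2.2 = 0 := by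
  rcases Nat.xor_trichotomy hxyz with hyz | hzx | hxy
  · obtain ⟨u, hu, hq⟩ := exists_fst_move_xor_eq_zero m hy hyz
    exact ⟨_, Or.inl ⟨u, hu, rfl⟩, hq⟩
  · refine ⟨_, Or.inr (Or.inl ⟨z ^^^ x, hzx, rfl⟩), ?_⟩
    dsimp only
    rw [Nat.xor_comm z x, xor_cancel_left, Nat.xor_self]
  · obtain ⟨w, hw, hq⟩ := exists_fst_move_xor_eq_zero m (x := z) (y := y) (z := x)
      (by rwa [Nat.add_comm]) (by rwa [Nat.xor_comm])
    refine ⟨_, Or.inr (Or.inr ⟨w, hw, rfl⟩), ?_⟩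
    dsimp only
    rw [← hq, min_comm, Nat.add_comm]
    ac_rfl

end

theorem stmt_13 (m x y z : ℕ)
    (hval : y ≤ (x + z) / (4 * m + 3)) :
    PPos (4 * m + 3) (x, y, z) ↔ x ^^^ y ^^^ z = 0 :=
  PPos_iff_of_kernel (fun p => p.2.1 ≤ (p.1 + p.2.2) / (4 * m + 3))
    (fun p => p.1 ^^^ p.2.1 ^^^ p.2.2 = 0) (fun _ hp _ hq => le_div_of_mem_moveF hp hq)
    (fun _ hp hS _ hq => xor_ne_zero_of_mem_moveF m hp hS hq)
    (fun _ hp hS => exists_mem_moveF_xor_eq_zero m hp hS) (x, y, z) hval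
end

section
/- The set A = {(x,y,z) ∈ Z_{≥0}^3 : x ⊕ y ⊕ z = 0, y ≤ floor((x+z)/k)} with k = 4m+3 is closed under no move of the chocolate-bar game: every move from a position in A (moves as in move_f) leads to a position outside A, and from every valid position outside A with y ≤ floor((x+z)/k) there is a move into A. -/
/-- The candidate set of P-positions: nim-sum zero valid positions. -/
def Aset (k : ℕ) : Set (ℕ × ℕ × ℕ) :=
  {p | p.1 ^^^ p.2.1 ^^^ p.2.2 = 0 ∧ p.2.1 ≤ (p.1 + p.2.2) / k}

namespace Nat

theorem xor_add_eq_two_mul_xor_add (t z : ℕ) :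
    (t ^^^ z) + z = 2 * ((t / 2 ^^^ z / 2) + z / 2) + (t + z) % 2 + z % 2 := by
  have := xor_div_two (a := t) (b := z)
  have := xor_mod_two_eq (m := t) (n := z)
  omega

theorem xor_add_mod_two (t z : ℕ) : ((t ^^^ z) + z) % 2 = t % 2 := by
  have := xor_mod_two_eq (m := t) (n := z)
  omega

variable {k : ℕ}

theorem mul_mod_two_of_odd (hk : k % 2 = 1) (n : ℕ) : n * k % 2 = n % 2 := by
  rw [Nat.mul_mod, hk, mul_one, Nat.mod_mod]

/- Halve `t` and `z`. For even `t = 2 * s` the two sides can differ only when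
`(s ^^^ z / 2) + z / 2 = s * k + (k - 1) / 2`, which parity forbids as `(k - 1) / 2` is odd. -/
theorem succ_mul_le_succ_xor_add_iff (hk : k % 4 = 3) (t z : ℕ) :
    (t + 1) * k ≤ ((t + 1) ^^^ z) + z ↔ (t + 1) * k < (t ^^^ z) + z := by
  have hpar := mul_mod_two_of_odd (k := k) (by omega)
  induction t using Nat.strong_induction_on generalizing z with
  | _ t ih =>
    obtain ⟨s, rfl | rfl⟩ : ∃ s, t = 2 * s ∨ t = 2 * s + 1 := ⟨t / 2, by omega⟩
    · have e₁ := xor_add_eq_two_mul_xor_add (2 * s + 1) z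
      have e₀ := xor_add_eq_two_mul_xor_add (2 * s) z
      rw [show (2 * s + 1) / 2 = s by omega] at e₁
      rw [show 2 * s / 2 = s by omega] at e₀
      have := xor_add_mod_two s (z / 2)
      have := hpar s
      rw [show (2 * s + 1) * k = 2 * (s * k) + k by ring]
      omega
    · have e₁ := xor_add_eq_two_mul_xor_add (2 * s + 1 + 1) z
      have e₀ := xor_add_eq_two_mul_xor_add (2 * s + 1) z
      rw [show (2 * s + 1 + 1) / 2 = s + 1 by omega] at e₁
      rw [show (2 * s + 1) / 2 = s by omega] at e₀
      have := xor_add_mod_two (s + 1) (z / 2)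
      have := xor_add_mod_two s (z / 2)
      have := hpar (s + 1)
      have := ih s (by omega) (z / 2)
      rw [show (2 * s + 1 + 1) * k = 2 * ((s + 1) * k) by ring]
      omega

theorem mul_le_xor_add_of_le (hk : k % 4 = 3) {s t z : ℕ} (hs : s * k ≤ (s ^^^ z) + z)
    (hts : t ≤ s) : t * k ≤ (t ^^^ z) + z := by
  induction s with
  | zero => simp_all
  | succ s ih =>
    rcases hts.eq_or_lt with rfl | hts
    · exact hs
    · have := (succ_mul_le_succ_xor_add_iff hk s z).1 hs
      exact ih (by nlinarith) (by omega)

theorem le_of_mul_le_xor_add (hk : k % 4 = 3) {s t z : ℕ} (hs : s * k ≤ (s ^^^ z) + z)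
    (ht : ((t ^^^ z) + z) / k = t) : s ≤ t := by
  by_contra! hts
  have := (succ_mul_le_succ_xor_add_iff hk t z).1 (mul_le_xor_add_of_le hk hs hts)
  have := (Nat.div_lt_iff_lt_mul (by omega)).1 (ht.trans_lt (by omega : t < t + 1))
  omega

theorem exists_lt_xor_add_div_eq (hk : k % 4 = 3) {y z : ℕ} (hy : ¬ y * k ≤ (y ^^^ z) + z) :
    ∃ t < y, ((t ^^^ z) + z) / k = t := by
  induction y with
  | zero => simp at hy
  | succ y ih =>
    by_cases hfit : y * k ≤ (y ^^^ z) + z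
    · refine ⟨y, y.lt_succ_self, Nat.div_eq_of_lt_le hfit ?_⟩
      have := mt (succ_mul_le_succ_xor_add_iff hk y z).2 hy
      have := xor_add_mod_two y z
      have := mul_mod_two_of_odd (k := k) (by omega) (y + 1)
      omega
    · obtain ⟨t, hty, ht⟩ := ih hfit
      exact ⟨t, by omega, ht⟩

end Nat

section Game

variable {k x y z : ℕ}

theorem mem_Aset_iff : (x, y, z) ∈ Aset k ↔ y = x ^^^ z ∧ y ≤ (x + z) / k := by
  show x ^^^ y ^^^ z = 0 ∧ _ ↔ _
  rw [Nat.xor_eq_zero_iff]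
  constructor
  · rintro ⟨rfl, h⟩
    exact ⟨(Nat.xor_xor_cancel_left x y).symm, h⟩
  · rintro ⟨rfl, h⟩
    exact ⟨Nat.xor_xor_cancel_left x z, h⟩

theorem swap_mem_Aset : (z, y, x) ∈ Aset k ↔ (x, y, z) ∈ Aset k := by
  rw [mem_Aset_iff, mem_Aset_iff, Nat.xor_comm, Nat.add_comm]

theorem fst_move_not_mem_Aset (hk : k % 4 = 3) (hp : (x, y, z) ∈ Aset k) {u : ℕ} (hu : u < x) :
    (u, min ((u + z) / k) y, z) ∉ Aset k := by
  rw [mem_Aset_iff] at hp ⊢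
  obtain ⟨rfl, hy⟩ := hp
  rintro ⟨hq, -⟩
  have hfit : (x ^^^ z) * k ≤ ((x ^^^ z) ^^^ z) + z := by
    rwa [Nat.xor_xor_cancel_right, ← Nat.le_div_iff_mul_le (by omega)]
  have hge : x ^^^ z ≤ u ^^^ z := by
    rcases min_choice ((u + z) / k) (x ^^^ z) with h | h <;> rw [h] at hq
    · exact Nat.le_of_mul_le_xor_add hk hfit (by rwa [Nat.xor_xor_cancel_right])
    · exact hq.le
  have hle : u ^^^ z ≤ x ^^^ z := by
    rw [← hq]
    exact min_le_right _ _
  exact hu.ne (Nat.xor_left_inj.1 (hle.antisymm hge))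

theorem exists_fst_move_mem_Aset (hk : k % 4 = 3) (hy : y ≤ (x + z) / k) (hyx : y ^^^ z < x) :
    ∃ u < x, (u, min ((u + z) / k) y, z) ∈ Aset k := by
  suffices ∃ t, t ^^^ z < x ∧ min (((t ^^^ z) + z) / k) y = t by
    obtain ⟨t, htx, ht⟩ := this
    refine ⟨t ^^^ z, htx, mem_Aset_iff.2 ⟨by rw [ht, Nat.xor_xor_cancel_right], min_le_left _ _⟩⟩
  by_cases hfit : y * k ≤ (y ^^^ z) + z
  · exact ⟨y, hyx, min_eq_right ((Nat.le_div_iff_mul_le (by omega)).2 hfit)⟩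
  · obtain ⟨t, hty, ht⟩ := Nat.exists_lt_xor_add_div_eq hk hfit
    refine ⟨t, ?_, by rw [ht]; exact min_eq_left hty.le⟩
    have := (Nat.div_lt_iff_lt_mul (by omega)).1 (ht.trans_lt (by omega : t < t + 1))
    have := (Nat.le_div_iff_mul_le (by omega)).1 hy
    have : (t + 1) * k ≤ y * k := Nat.mul_le_mul_right k hty
    omega

theorem not_mem_Aset_of_mem_moveF (hk : k % 4 = 3) {p q : ℕ × ℕ × ℕ} (hp : p ∈ Aset k)
    (hq : q ∈ moveF k p) : q ∉ Aset k := by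
  obtain ⟨x, y, z⟩ := p
  rcases hq with ⟨u, hu, rfl⟩ | ⟨v, hv, rfl⟩ | ⟨w, hw, rfl⟩
  · exact fst_move_not_mem_Aset hk hp hu
  · simp only [mem_Aset_iff] at hp hv ⊢
    omega
  · have := fst_move_not_mem_Aset hk (swap_mem_Aset.2 hp) hw
    rwa [min_comm, Nat.add_comm w x, swap_mem_Aset] at this

theorem exists_mem_moveF_mem_Aset (hk : k % 4 = 3) {p : ℕ × ℕ × ℕ}
    (hvalid : p.2.1 ≤ (p.1 + p.2.2) / k) (hp : p ∉ Aset k) : ∃ q ∈ moveF k p, q ∈ Aset k := by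
  obtain ⟨x, y, z⟩ := p
  have hne : y ≠ x ^^^ z := fun h => hp (mem_Aset_iff.2 ⟨h, hvalid⟩)
  rcases hne.lt_or_gt with hlt | hgt
  · rcases Nat.lt_xor_cases hlt with h | h
    · obtain ⟨u, hu, hmem⟩ := exists_fst_move_mem_Aset hk hvalid h
      exact ⟨_, Or.inl ⟨u, hu, rfl⟩, hmem⟩
    · obtain ⟨w, hw, hmem⟩ :=
        exists_fst_move_mem_Aset (x := z) (z := x) hk (by rwa [Nat.add_comm]) h
      refine ⟨_, Or.inr (Or.inr ⟨w, hw, rfl⟩), ?_⟩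
      rwa [← swap_mem_Aset, min_comm, Nat.add_comm x w]
  · exact ⟨_, Or.inr (Or.inl ⟨_, hgt, rfl⟩), mem_Aset_iff.2 ⟨rfl, hgt.le.trans hvalid⟩⟩

end Game

theorem stmt_14 (m : ℕ) :
    (∀ p ∈ Aset (4 * m + 3), ∀ q ∈ moveF (4 * m + 3) p, q ∉ Aset (4 * m + 3)) ∧
    (∀ p : ℕ × ℕ × ℕ, p.2.1 ≤ (p.1 + p.2.2) / (4 * m + 3) → p ∉ Aset (4 * m + 3) →
      ∃ q ∈ moveF (4 * m + 3) p, q ∈ Aset (4 * m + 3)) :=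
  ⟨fun _ hp _ => not_mem_Aset_of_mem_moveF (by omega) hp,
    fun _ => exists_mem_moveF_mem_Aset (by omega)⟩
end

section
/- Let k = 4m+3 and f(x,z) = floor((x+z)/k). If x ⊕ y ⊕ z = 0 and y ≤ f(x,z), and u < x, v < y satisfy u ⊕ v ⊕ z = 0, then v ≠ f(u,z). -/
/-!
Since `x ⊕ u = y ⊕ v`, both pairs first differ at the same bit `t`, the top bit of `x ⊕ u`;
as `u < x` and `v < y`, that bit is set in `x` and `y` and clear in `u`, `v` and `z = x ⊕ y`.
Dividing by `2 ^ t`, write `u, v, z` as `2X, 2Y, 2W` and `x, y` as `2X + 1, 2Y + 1`, where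
`W ≡ X + Y (mod 2)`. The two floor conditions then squeeze the odd number `(2Y + 1)(4m + 3)`
strictly between `2(X + W)` and `2(X + W) + 3`, so `X + W = (4m + 3)Y + 2m + 1 ≡ Y + 1`,
whereas `X + W ≡ Y`.
-/

namespace Nat

theorem xor_eq_xor_of_xor_xor_eq_zero {x y u v z : ℕ} (h : x ^^^ y ^^^ z = 0)
    (h' : u ^^^ v ^^^ z = 0) : x ^^^ u = y ^^^ v := by
  rw [Nat.xor_eq_zero_iff] at h h'
  rw [← Nat.xor_eq_zero_iff]
  calc x ^^^ u ^^^ (y ^^^ v) = x ^^^ y ^^^ (u ^^^ v) := by ac_rfl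
    _ = 0 := by rw [h, h', Nat.xor_self]

theorem div_two_pow_log2 {d : ℕ} (hd : d ≠ 0) : d / 2 ^ d.log2 = 1 :=
  Nat.div_eq_of_lt_le (by simpa using log2_self_le hd)
    (by simpa [Nat.pow_succ, Nat.mul_comm] using lt_log2_self (n := d))

theorem div_two_pow_eq_succ_of_xor_div_two_pow_eq_one {x u t : ℕ} (hux : u ≤ x)
    (hd : (x ^^^ u) / 2 ^ t = 1) : x / 2 ^ t = u / 2 ^ t + 1 ∧ Even (u / 2 ^ t) := by
  rw [xor_div_two_pow] at hd
  have hle : u / 2 ^ t ≤ x / 2 ^ t := Nat.div_le_div_right hux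
  have hhigh : x / 2 ^ t / 2 ^^^ u / 2 ^ t / 2 = 0 := by rw [← xor_div_two, hd]
  have hlow := congrArg (· % 2) hd
  simp only [xor_mod_two_eq] at hlow
  rw [xor_eq_zero_iff] at hhigh
  rw [even_iff]
  omega

theorem add_one_xor_add_one_of_even {a b : ℕ} (ha : Even a) (hb : Even b) :
    (a + 1) ^^^ (b + 1) = a ^^^ b := by
  rw [← xor_one_of_even ha, ← xor_one_of_even hb, xor_assoc, xor_comm 1, xor_assoc, Nat.xor_self,
    xor_zero]

theorem div_mul_lt_div_add_div_add_two {T k x y z : ℕ} (hT : 0 < T) (h : y * k ≤ x + z) :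
    y / T * k < x / T + z / T + 2 := by
  refine Nat.lt_of_mul_lt_mul_right (a := T) ?_
  calc y / T * k * T = y / T * T * k := by ring
    _ ≤ y * k := Nat.mul_le_mul_right k (div_mul_le_self y T)
    _ ≤ x + z := h
    _ < (x / T * T + T) + (z / T * T + T) :=
        Nat.add_lt_add (lt_div_mul_add hT) (lt_div_mul_add hT)
    _ = (x / T + z / T + 2) * T := by ring

theorem div_add_div_lt_of_add_lt_mul {T k u v z : ℕ} (hT : 0 < T) (h : u + z < (v + 1) * k) :
    u / T + z / T < (v / T + 1) * k := by
  refine Nat.lt_of_mul_lt_mul_right (a := T) ?_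
  calc (u / T + z / T) * T = u / T * T + z / T * T := by ring
    _ ≤ u + z := Nat.add_le_add (div_mul_le_self u T) (div_mul_le_self z T)
    _ < (v + 1) * k := h
    _ ≤ (v / T * T + T) * k := Nat.mul_le_mul_right k (lt_div_mul_add hT)
    _ = (v / T + 1) * k * T := by ring

theorem mul_four_mul_add_three_notMem_Ioo {m X Y W : ℕ} (hW : W % 2 = (X + Y) % 2) :
    (2 * Y + 1) * (4 * m + 3) ∉ Set.Ioo (2 * (X + W)) (2 * (X + W) + 3) := by
  rintro ⟨hlt, hgt⟩
  have : (2 * Y + 1) * (4 * m + 3) = 2 * (4 * (m * Y) + 3 * Y + 2 * m + 1) + 1 := by ring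
  omega

end Nat

open Nat in
theorem stmt_16 (m x y z u v : ℕ)
    (h1 : x ^^^ y ^^^ z = 0)
    (h2 : y ≤ (x + z) / (4 * m + 3))
    (hu : u < x) (hv : v < y)
    (huv : u ^^^ v ^^^ z = 0) :
    v ≠ (u + z) / (4 * m + 3) := by
  intro hveq
  have hk : 0 < 4 * m + 3 := by omega
  set t := (x ^^^ u).log2
  have hxu : (x ^^^ u) / 2 ^ t = 1 := div_two_pow_log2 (by simpa using hu.ne')
  have hyv : (y ^^^ v) / 2 ^ t = 1 := by rwa [← xor_eq_xor_of_xor_xor_eq_zero h1 huv]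
  obtain ⟨hx, hu_even⟩ := div_two_pow_eq_succ_of_xor_div_two_pow_eq_one hu.le hxu
  obtain ⟨hy, hv_even⟩ := div_two_pow_eq_succ_of_xor_div_two_pow_eq_one hv.le hyv
  have hz : z / 2 ^ t = u / 2 ^ t ^^^ v / 2 ^ t := by
    rw [← Nat.xor_eq_zero_iff.mp h1, xor_div_two_pow, hx, hy,
      add_one_xor_add_one_of_even hu_even hv_even]
  have hlow := div_mul_lt_div_add_div_add_two (Nat.two_pow_pos t)
    ((Nat.le_div_iff_mul_le hk).mp h2)
  have hhigh := div_add_div_lt_of_add_lt_mul (Nat.two_pow_pos t)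
    ((Nat.div_lt_iff_lt_mul hk).mp (by omega : (u + z) / (4 * m + 3) < v + 1))
  have hW : z / 2 ^ t / 2 % 2 = (u / 2 ^ t / 2 + v / 2 ^ t / 2) % 2 := by
    rw [hz, xor_div_two, xor_mod_two_eq]
  rw [even_iff] at hu_even hv_even
  have hz_even : z / 2 ^ t % 2 = 0 := by rw [hz, xor_mod_two_eq]; omega
  have hv_half : 2 * (v / 2 ^ t / 2) + 1 = v / 2 ^ t + 1 := by omega
  refine mul_four_mul_add_three_notMem_Ioo (m := m) hW ⟨?_, ?_⟩
  · rw [hv_half]; omega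
  · rw [hv_half, ← hy]; omega
end
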